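/- arXiv:1807.01753 — 6 statements merged into one kernel-verified Lean document; each statement's English description precedes it below -/
import Mathlib

section
/- Let f_R(z) = d_R + c_R(zI_m - A_R)^{-1}b_R be a scalar rational function (c_R a row vector, b_R a column vector) and F_L(w) = D_L + C_L(wI_n - A_L)^{-1}B_L a p×p matrix-valued rational function. Assume d_R I_n - A_L is invertible. Then for all z where everything is defined, F_L(f_R(z)) = D_comp + C_comp(zI_{mn} - A_comp)^{-1}B_comp, where Δ = d_R I_n - A_L, A_comp = I_n⊗A_R - (I_n⊗b_R)Δ^{-1}(I_n⊗c_R), B_comp = -(I_n⊗b_R)Δ^{-1}B_L, C_comp = C_L Δ^{-1}(I_n⊗c_R), D_comp = D_L + C_L Δ^{-1}B_L. -/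
open Matrix Kronecker

/-- `I_n ⊗ c_R`, reindexed so that rows are indexed by `Fin n`. -/
noncomputable def kronRow (n m : ℕ) (c : Matrix (Fin 1) (Fin m) ℂ) :
    Matrix (Fin n) (Fin n × Fin m) ℂ :=
  Matrix.reindex (Equiv.prodUnique (Fin n) (Fin 1)) (Equiv.refl (Fin n × Fin m))
    ((1 : Matrix (Fin n) (Fin n) ℂ) ⊗ₖ c)

/-- `I_n ⊗ b_R`, reindexed so that columns are indexed by `Fin n`. -/
noncomputable def kronCol (n m : ℕ) (b : Matrix (Fin m) (Fin 1) ℂ) :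
    Matrix (Fin n × Fin m) (Fin n) ℂ :=
  Matrix.reindex (Equiv.refl (Fin n × Fin m)) (Equiv.prodUnique (Fin n) (Fin 1))
    ((1 : Matrix (Fin n) (Fin n) ℂ) ⊗ₖ b)

/-- The scalar rational function `f_R(z) = d_R + c_R (zI_m - A_R)⁻¹ b_R`. -/
noncomputable def fRscalar (m : ℕ) (A_R : Matrix (Fin m) (Fin m) ℂ)
    (b_R : Matrix (Fin m) (Fin 1) ℂ) (c_R : Matrix (Fin 1) (Fin m) ℂ) (d_R z : ℂ) : ℂ :=
  d_R + (c_R * (z • (1 : Matrix (Fin m) (Fin m) ℂ) - A_R)⁻¹ * b_R) 0 0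

set_option maxHeartbeats 1000000 in
lemma kron_sandwich (n m : ℕ) (c : Matrix (Fin 1) (Fin m) ℂ) (b : Matrix (Fin m) (Fin 1) ℂ)
    (X : Matrix (Fin m) (Fin m) ℂ) :
    kronRow n m c * ((1 : Matrix (Fin n) (Fin n) ℂ) ⊗ₖ X) * kronCol n m b
      = ((c * X * b) 0 0) • (1 : Matrix (Fin n) (Fin n) ℂ) := by
  set e := Equiv.prodUnique (Fin n) (Fin 1) with he
  have h1 : kronRow n m c * ((1 : Matrix (Fin n) (Fin n) ℂ) ⊗ₖ X)
      = (((1 : Matrix (Fin n) (Fin n) ℂ) ⊗ₖ c) * ((1 : Matrix (Fin n) (Fin n) ℂ) ⊗ₖ X)).submatrix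
          e.symm id := by
    rw [kronRow, reindex_apply]
    simpa using
      (Matrix.submatrix_mul ((1 : Matrix (Fin n) (Fin n) ℂ) ⊗ₖ c)
        ((1 : Matrix (Fin n) (Fin n) ℂ) ⊗ₖ X) e.symm id id Function.bijective_id).symm
  have h2 : (((1 : Matrix (Fin n) (Fin n) ℂ) ⊗ₖ c) * ((1 : Matrix (Fin n) (Fin n) ℂ) ⊗ₖ X)).submatrix
        e.symm id * kronCol n m b
      = (((1 : Matrix (Fin n) (Fin n) ℂ) ⊗ₖ c) * ((1 : Matrix (Fin n) (Fin n) ℂ) ⊗ₖ X)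
          * ((1 : Matrix (Fin n) (Fin n) ℂ) ⊗ₖ b)).submatrix e.symm e.symm := by
    rw [kronCol, reindex_apply]
    simpa using
      (Matrix.submatrix_mul
        (((1 : Matrix (Fin n) (Fin n) ℂ) ⊗ₖ c) * ((1 : Matrix (Fin n) (Fin n) ℂ) ⊗ₖ X))
        ((1 : Matrix (Fin n) (Fin n) ℂ) ⊗ₖ b) e.symm id e.symm Function.bijective_id).symm
  rw [h1, h2]
  have h3 : ((1 : Matrix (Fin n) (Fin n) ℂ) ⊗ₖ c) * ((1 : Matrix (Fin n) (Fin n) ℂ) ⊗ₖ X)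
      * ((1 : Matrix (Fin n) (Fin n) ℂ) ⊗ₖ b)
      = (1 : Matrix (Fin n) (Fin n) ℂ) ⊗ₖ (c * X * b) := by
    rw [← mul_kronecker_mul, ← mul_kronecker_mul, one_mul, one_mul]
  rw [h3]
  ext i j
  simp [Matrix.submatrix_apply, kroneckerMap_apply, Matrix.one_apply, Matrix.smul_apply, he,
    mul_comm]


set_option maxHeartbeats 1000000 in
theorem stmt3 (n m p : ℕ)
    (A_R : Matrix (Fin m) (Fin m) ℂ) (b_R : Matrix (Fin m) (Fin 1) ℂ)
    (c_R : Matrix (Fin 1) (Fin m) ℂ) (d_R : ℂ)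
    (A_L : Matrix (Fin n) (Fin n) ℂ) (B_L : Matrix (Fin n) (Fin p) ℂ)
    (C_L : Matrix (Fin p) (Fin n) ℂ) (D_L : Matrix (Fin p) (Fin p) ℂ)
    (hΔ : IsUnit (d_R • (1 : Matrix (Fin n) (Fin n) ℂ) - A_L).det)
    (z : ℂ)
    (hzR : IsUnit (z • (1 : Matrix (Fin m) (Fin m) ℂ) - A_R).det)
    (hfL : IsUnit ((fRscalar m A_R b_R c_R d_R z) • (1 : Matrix (Fin n) (Fin n) ℂ) - A_L).det)
    (hcomp : IsUnit (z • (1 : Matrix (Fin n × Fin m) (Fin n × Fin m) ℂ)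
        - ((1 : Matrix (Fin n) (Fin n) ℂ) ⊗ₖ A_R
            - kronCol n m b_R * (d_R • (1 : Matrix (Fin n) (Fin n) ℂ) - A_L)⁻¹
                * kronRow n m c_R)).det) :
    D_L + C_L * ((fRscalar m A_R b_R c_R d_R z) • (1 : Matrix (Fin n) (Fin n) ℂ) - A_L)⁻¹ * B_L
      = (D_L + C_L * (d_R • (1 : Matrix (Fin n) (Fin n) ℂ) - A_L)⁻¹ * B_L)
        + (C_L * (d_R • (1 : Matrix (Fin n) (Fin n) ℂ) - A_L)⁻¹ * kronRow n m c_R)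
          * (z • (1 : Matrix (Fin n × Fin m) (Fin n × Fin m) ℂ)
              - ((1 : Matrix (Fin n) (Fin n) ℂ) ⊗ₖ A_R
                  - kronCol n m b_R * (d_R • (1 : Matrix (Fin n) (Fin n) ℂ) - A_L)⁻¹
                      * kronRow n m c_R))⁻¹
          * (-(kronCol n m b_R * (d_R • (1 : Matrix (Fin n) (Fin n) ℂ) - A_L)⁻¹ * B_L)) := by
  set Y : Matrix (Fin m) (Fin m) ℂ := z • (1 : Matrix (Fin m) (Fin m) ℂ) - A_R with hYdef
  set Δ : Matrix (Fin n) (Fin n) ℂ := d_R • (1 : Matrix (Fin n) (Fin n) ℂ) - A_L with hΔdef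
  set g : ℂ := (c_R * Y⁻¹ * b_R) 0 0 with hgdef
  set W : Matrix (Fin n) (Fin n) ℂ :=
    (fRscalar m A_R b_R c_R d_R z) • (1 : Matrix (Fin n) (Fin n) ℂ) - A_L with hWdef
  set Kc := kronRow n m c_R with hKc
  set Kb := kronCol n m b_R with hKb
  set M : Matrix (Fin n × Fin m) (Fin n × Fin m) ℂ := (1 : Matrix (Fin n) (Fin n) ℂ) ⊗ₖ Y with hMdef
  set Mi : Matrix (Fin n × Fin m) (Fin n × Fin m) ℂ := (1 : Matrix (Fin n) (Fin n) ℂ) ⊗ₖ Y⁻¹ with hMidef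
  have hY1 : Y * Y⁻¹ = 1 := Matrix.mul_nonsing_inv _ hzR
  have hY2 : Y⁻¹ * Y = 1 := Matrix.nonsing_inv_mul _ hzR
  have hΔ1 : Δ * Δ⁻¹ = 1 := Matrix.mul_nonsing_inv _ hΔ
  have hΔ2 : Δ⁻¹ * Δ = 1 := Matrix.nonsing_inv_mul _ hΔ
  have hW1 : W * W⁻¹ = 1 := Matrix.mul_nonsing_inv _ hfL
  have hW2 : W⁻¹ * W = 1 := Matrix.nonsing_inv_mul _ hfL
  have hWΔ : W = Δ + g • (1 : Matrix (Fin n) (Fin n) ℂ) := by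
    rw [hWdef, hΔdef, fRscalar, add_smul]
    abel
  have hM1 : M * Mi = 1 := by
    rw [hMdef, hMidef, ← mul_kronecker_mul, one_mul, hY1, one_kronecker_one]
  have hMi2 : Mi * M = 1 := by
    rw [hMdef, hMidef, ← mul_kronecker_mul, one_mul, hY2, one_kronecker_one]
  have hM1' : ∀ (q : Type) (X : Matrix (Fin n × Fin m) q ℂ), M * (Mi * X) = X := by
    intro q X; rw [← Matrix.mul_assoc, hM1, Matrix.one_mul]
  have sand : ∀ (q : Type) (X : Matrix (Fin n) q ℂ), Kc * (Mi * (Kb * X)) = g • X := by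
    intro q X
    have h := kron_sandwich n m c_R b_R Y⁻¹
    calc Kc * (Mi * (Kb * X)) = (Kc * Mi * Kb) * X := by
          simp only [Matrix.mul_assoc]
      _ = (g • (1 : Matrix (Fin n) (Fin n) ℂ)) * X := by rw [← hKc, ← hKb, ← hMidef] at h; rw [h]
      _ = g • X := by rw [Matrix.smul_mul, Matrix.one_mul]
  have sand0 : Kc * Mi * Kb = g • (1 : Matrix (Fin n) (Fin n) ℂ) := by
    have h := kron_sandwich n m c_R b_R Y⁻¹
    rw [← hKc, ← hKb, ← hMidef] at h; exact h
  -- N = M + Kb Δ⁻¹ Kc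
  set N : Matrix (Fin n × Fin m) (Fin n × Fin m) ℂ :=
    z • (1 : Matrix (Fin n × Fin m) (Fin n × Fin m) ℂ)
      - ((1 : Matrix (Fin n) (Fin n) ℂ) ⊗ₖ A_R - Kb * Δ⁻¹ * Kc) with hNdef
  have hMsplit : M = z • (1 : Matrix (Fin n × Fin m) (Fin n × Fin m) ℂ)
      - (1 : Matrix (Fin n) (Fin n) ℂ) ⊗ₖ A_R := by
    ext ⟨i1, i2⟩ ⟨j1, j2⟩
    simp [hMdef, hYdef, kroneckerMap_apply, Matrix.one_apply, Matrix.sub_apply,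
      Matrix.smul_apply, Prod.ext_iff, mul_sub]
    split_ifs <;> simp_all
  have hN : N = M + Kb * Δ⁻¹ * Kc := by
    rw [hNdef, hMsplit]; abel
  -- key identities
  have comm : Δ⁻¹ * W⁻¹ = W⁻¹ * Δ⁻¹ := by
    have hc : Δ * W = W * Δ := by rw [hWΔ]; noncomm_ring
    rw [← Matrix.mul_inv_rev, ← Matrix.mul_inv_rev, hc]
  have key : Δ⁻¹ - W⁻¹ = g • (Δ⁻¹ * W⁻¹) := by
    have : Δ⁻¹ - W⁻¹ = Δ⁻¹ * (W - Δ) * W⁻¹ := by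
      rw [Matrix.mul_sub, Matrix.sub_mul, Matrix.mul_assoc, hW1, Matrix.mul_one, hΔ2,
        Matrix.one_mul]
    rw [this, hWΔ]
    simp only [add_sub_cancel_left, mul_smul_comm, smul_mul_assoc, Matrix.mul_one]
  have key' : Δ⁻¹ - g • (Δ⁻¹ * W⁻¹) = W⁻¹ := by rw [← key, sub_sub_cancel]
  -- candidate inverse of N
  set cand : Matrix (Fin n × Fin m) (Fin n × Fin m) ℂ :=
    Mi - Mi * Kb * W⁻¹ * Kc * Mi with hcand
  clear_value cand
  clear_value Y Δ g W Kc Kb M Mi N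
  have hz0 : Δ⁻¹ - W⁻¹ - g • (Δ⁻¹ * W⁻¹) = 0 := by rw [sub_eq_zero]; exact key
  have hz : ∀ (q : Type) (X : Matrix (Fin n) q ℂ),
      Kb * (Δ⁻¹ * X) - Kb * (W⁻¹ * X) - g • (Kb * (Δ⁻¹ * (W⁻¹ * X))) = 0 := by
    intro q X
    have h : Kb * (Δ⁻¹ * X) - Kb * (W⁻¹ * X) - g • (Kb * (Δ⁻¹ * (W⁻¹ * X)))
        = Kb * ((Δ⁻¹ - W⁻¹ - g • (Δ⁻¹ * W⁻¹)) * X) := by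
      simp [Matrix.sub_mul, Matrix.mul_sub, Matrix.mul_assoc, smul_mul_assoc, mul_smul_comm]
    rw [h, hz0, Matrix.zero_mul, Matrix.mul_zero]
  have hNc : N * cand = 1 := by
    rw [hN, hcand]
    simp only [Matrix.add_mul, Matrix.mul_sub, Matrix.mul_assoc, hM1, hM1', sand,
      mul_smul_comm, Matrix.mul_smul]
    have h := hz _ (Kc * Mi)
    linear_combination (norm := abel) h
  have hNinv : N⁻¹ = cand := Matrix.inv_eq_right_inv hNc
  rw [hNinv, hcand]
  simp only [Matrix.mul_sub, Matrix.sub_mul, Matrix.mul_neg, Matrix.neg_mul, Matrix.mul_assoc,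
    sand, mul_smul_comm, Matrix.mul_smul, Matrix.smul_mul, smul_mul_assoc, smul_smul]
  have e1 : W⁻¹ * Δ⁻¹ = Δ⁻¹ * W⁻¹ := comm.symm
  have hfin : Δ⁻¹ - g • (Δ⁻¹ * Δ⁻¹) + (g * g) • (Δ⁻¹ * (W⁻¹ * Δ⁻¹)) = W⁻¹ := by
    conv_rhs => rw [← key', ← key']
    rw [e1]
    simp only [Matrix.mul_sub, Matrix.mul_smul, smul_sub, smul_smul, Matrix.mul_assoc]
    abel
  have hexp : C_L * (W⁻¹ * B_L)
      = C_L * (Δ⁻¹ * B_L) - g • (C_L * (Δ⁻¹ * (Δ⁻¹ * B_L)))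
        + (g * g) • (C_L * (Δ⁻¹ * (W⁻¹ * (Δ⁻¹ * B_L)))) := by
    conv_lhs => rw [← hfin]
    simp only [Matrix.sub_mul, Matrix.add_mul, Matrix.smul_mul, Matrix.mul_assoc,
      Matrix.mul_sub, Matrix.mul_add, Matrix.mul_smul]
  rw [hexp]
  abel
end

section
/- Let F_L(z) = D_L + C_L(zI_n - A_L)^{-1}B_L be p×p-valued of McMillan degree n and F_R(z) = D_R + C_R(zI_m - A_R)^{-1}B_R be n×n-valued. Assume det(D_R - A_L) ≠ 0. Then the second composition F_L(F_R(z)) := D_L + C_L(F_R(z) - A_L)^{-1}B_L satisfies, for all z where both sides are defined: F_L(F_R(z)) = D_comp + C_comp(zI_m - A_comp)^{-1}B_comp, with A_comp = A_R - B_R(D_R - A_L)^{-1}C_R, B_comp = B_R(D_R - A_L)^{-1}B_L, C_comp = -C_L(D_R - A_L)^{-1}C_R, D_comp = D_L + C_L(D_R - A_L)^{-1}B_L. -/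
open Matrix

lemma woodbury {n m : ℕ} (E : Matrix (Fin n) (Fin n) ℂ) (Z S : Matrix (Fin m) (Fin m) ℂ)
    (B : Matrix (Fin m) (Fin n) ℂ) (C : Matrix (Fin n) (Fin m) ℂ)
    (hSdef : S = Z + B * E⁻¹ * C)
    (hE : IsUnit E.det) (hZ : IsUnit Z.det) (hS : IsUnit S.det) :
    (E + C * Z⁻¹ * B)⁻¹ = E⁻¹ - E⁻¹ * C * S⁻¹ * B * E⁻¹ := by
  apply Matrix.inv_eq_right_inv
  have hBEC : B * E⁻¹ * C = S - Z := by rw [hSdef]; abel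
  have hZS : C * Z⁻¹ * (B * E⁻¹ * C) * S⁻¹ = C * Z⁻¹ - C * S⁻¹ := by
    rw [hBEC, Matrix.mul_sub, Matrix.sub_mul,
      Matrix.mul_nonsing_inv_cancel_right _ _ hS,
      Matrix.nonsing_inv_mul_cancel_right _ _ hZ]
  calc (E + C * Z⁻¹ * B) * (E⁻¹ - E⁻¹ * C * S⁻¹ * B * E⁻¹)
      = E * E⁻¹ - (E * E⁻¹) * C * S⁻¹ * B * E⁻¹ + (C * Z⁻¹ * B * E⁻¹
        - C * Z⁻¹ * (B * E⁻¹ * C) * S⁻¹ * B * E⁻¹) := by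
        simp only [Matrix.add_mul, Matrix.mul_sub, Matrix.mul_assoc]; abel
    _ = 1 := by
        rw [Matrix.mul_nonsing_inv _ hE, hZS, Matrix.one_mul, Matrix.sub_mul, Matrix.sub_mul]
        abel

theorem stmt7 (n m p : ℕ)
    (A_L : Matrix (Fin n) (Fin n) ℂ) (B_L : Matrix (Fin n) (Fin p) ℂ)
    (C_L : Matrix (Fin p) (Fin n) ℂ) (D_L : Matrix (Fin p) (Fin p) ℂ)
    (A_R : Matrix (Fin m) (Fin m) ℂ) (B_R : Matrix (Fin m) (Fin n) ℂ)
    (C_R : Matrix (Fin n) (Fin m) ℂ) (D_R : Matrix (Fin n) (Fin n) ℂ)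
    (hDet : IsUnit (D_R - A_L).det)
    (z : ℂ)
    (hzR : IsUnit (z • (1 : Matrix (Fin m) (Fin m) ℂ) - A_R).det)
    (hFA : IsUnit ((D_R + C_R * (z • (1 : Matrix (Fin m) (Fin m) ℂ) - A_R)⁻¹ * B_R) - A_L).det)
    (hcomp : IsUnit (z • (1 : Matrix (Fin m) (Fin m) ℂ)
        - (A_R - B_R * (D_R - A_L)⁻¹ * C_R)).det) :
    D_L + C_L * ((D_R + C_R * (z • (1 : Matrix (Fin m) (Fin m) ℂ) - A_R)⁻¹ * B_R) - A_L)⁻¹ * B_L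
      = (D_L + C_L * (D_R - A_L)⁻¹ * B_L)
        + (-(C_L * (D_R - A_L)⁻¹ * C_R))
          * (z • (1 : Matrix (Fin m) (Fin m) ℂ) - (A_R - B_R * (D_R - A_L)⁻¹ * C_R))⁻¹
          * (B_R * (D_R - A_L)⁻¹ * B_L) := by
  have hM : (D_R + C_R * (z • (1 : Matrix (Fin m) (Fin m) ℂ) - A_R)⁻¹ * B_R) - A_L
      = (D_R - A_L) + C_R * (z • (1 : Matrix (Fin m) (Fin m) ℂ) - A_R)⁻¹ * B_R := by abel
  have hSdef : z • (1 : Matrix (Fin m) (Fin m) ℂ) - (A_R - B_R * (D_R - A_L)⁻¹ * C_R)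
      = (z • (1 : Matrix (Fin m) (Fin m) ℂ) - A_R) + B_R * (D_R - A_L)⁻¹ * C_R := by abel
  rw [hM, woodbury (D_R - A_L) (z • (1 : Matrix (Fin m) (Fin m) ℂ) - A_R)
    (z • (1 : Matrix (Fin m) (Fin m) ℂ) - (A_R - B_R * (D_R - A_L)⁻¹ * C_R)) B_R C_R hSdef
    hDet hzR hcomp]
  simp only [Matrix.mul_sub, Matrix.sub_mul, Matrix.add_mul, Matrix.neg_mul, Matrix.mul_assoc]
  abel
end

section
/- Consider the second composition realization. Suppose S_L ∈ ℂ^{n×n} is invertible and commutes with A_L, S_L B_L = B_L, and C_L S_L = C_L (i.e., diag(S_L, I) commutes with the realization array of F_L). Then applying changes of coordinates S_L to F_L's realization and S_R to F_R's realization yields a composed realization that is similar, via diag(S_R, I_p), to the composition of the original realizations. -/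
open Matrix

theorem stmt8 (n m p : ℕ)
    (A_L : Matrix (Fin n) (Fin n) ℂ) (B_L : Matrix (Fin n) (Fin p) ℂ)
    (C_L : Matrix (Fin p) (Fin n) ℂ) (D_L : Matrix (Fin p) (Fin p) ℂ)
    (A_R : Matrix (Fin m) (Fin m) ℂ) (B_R : Matrix (Fin m) (Fin n) ℂ)
    (C_R : Matrix (Fin n) (Fin m) ℂ) (D_R : Matrix (Fin n) (Fin n) ℂ)
    (hDet : IsUnit (D_R - A_L).det)
    (S_L : Matrix (Fin n) (Fin n) ℂ) (hSL : IsUnit S_L.det)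
    (hcomm : S_L * A_L = A_L * S_L) (hB : S_L * B_L = B_L) (hC : C_L * S_L = C_L)
    (S_R : Matrix (Fin m) (Fin m) ℂ) (hSR : IsUnit S_R.det) :
    -- the second-composition realization computed from the transformed realizations
    -- (A_L, B_L, C_L, D_L) ↦ (S_L⁻¹ A_L S_L, S_L⁻¹ B_L, C_L S_L, D_L),
    -- (A_R, B_R, C_R, D_R) ↦ (S_R⁻¹ A_R S_R, S_R⁻¹ B_R, C_R S_R, D_R)
    -- is similar, via diag(S_R, I_p), to the composition of the original realizations:
    (S_R⁻¹ * A_R * S_R) - (S_R⁻¹ * B_R) * (D_R - S_L⁻¹ * A_L * S_L)⁻¹ * (C_R * S_R)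
        = S_R⁻¹ * (A_R - B_R * (D_R - A_L)⁻¹ * C_R) * S_R ∧
    (S_R⁻¹ * B_R) * (D_R - S_L⁻¹ * A_L * S_L)⁻¹ * (S_L⁻¹ * B_L)
        = S_R⁻¹ * (B_R * (D_R - A_L)⁻¹ * B_L) ∧
    -((C_L * S_L) * (D_R - S_L⁻¹ * A_L * S_L)⁻¹ * (C_R * S_R))
        = (-(C_L * (D_R - A_L)⁻¹ * C_R)) * S_R ∧
    D_L + (C_L * S_L) * (D_R - S_L⁻¹ * A_L * S_L)⁻¹ * (S_L⁻¹ * B_L)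
        = D_L + C_L * (D_R - A_L)⁻¹ * B_L := by
  have hA : S_L⁻¹ * A_L * S_L = A_L := by
    rw [Matrix.mul_assoc, ← hcomm, ← Matrix.mul_assoc, Matrix.nonsing_inv_mul _ hSL,
      Matrix.one_mul]
  have hBL : S_L⁻¹ * B_L = B_L := by
    conv_lhs => rw [← hB, ← Matrix.mul_assoc, Matrix.nonsing_inv_mul _ hSL, Matrix.one_mul]
  refine ⟨?_, ?_, ?_, ?_⟩ <;>
    simp only [hA, hBL, hC, Matrix.mul_sub, Matrix.sub_mul, Matrix.mul_assoc, Matrix.neg_mul]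
end

section
/- Let α > 0, β > 0, δ ≥ 0 be real numbers and define f(z) = i(δ + β/α) + β/(z + iα). Then f is a Stieltjes function: f is analytic on the open right half-plane, Re f(z) ≥ 0 for all z with Re z > 0, and Re((1/(iz))f(z)) ≥ 0 for all z with Re z > 0. -/
/-!
Writing `w = z + iα`, the real part of `f` is that of `β / w`, and `Re w = Re z`. The partial
fraction `1 / (z w) = (1 / z - 1 / w) / (iα)` turns `f(z) / (iz)` into `δ / z + (β / α) / w`.
Both are then nonnegative reals divided by points of the closed right half-plane, whose inverses
stay in that half-plane.
-/

open Complex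

namespace Complex

lemma re_add_I_mul_ofReal (z : ℂ) (a : ℝ) : (z + I * a).re = z.re := by
  simp

lemma add_I_mul_ofReal_ne_zero {z : ℂ} (hz : 0 < z.re) (a : ℝ) : z + I * a ≠ 0 := by
  intro h
  have := re_add_I_mul_ofReal z a
  rw [h, zero_re] at this
  linarith

lemma re_ofReal_div_nonneg {r : ℝ} {w : ℂ} (hr : 0 ≤ r) (hw : 0 ≤ w.re) :
    0 ≤ ((r : ℂ) / w).re := by
  rw [div_eq_mul_inv, re_ofReal_mul, inv_re]
  exact mul_nonneg hr (div_nonneg hw (normSq_nonneg w))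

lemma one_div_I_mul_mul_I_mul_add_div {z : ℂ} {α β δ : ℝ} (hz : z ≠ 0) (hα : α ≠ 0)
    (hw : z + I * α ≠ 0) :
    1 / (I * z) * (I * (δ + β / α) + β / (z + I * α)) =
      δ / z + ((β / α : ℝ) : ℂ) / (z + I * α) := by
  have hα' : (α : ℂ) ≠ 0 := ofReal_ne_zero.mpr hα
  push_cast
  field_simp
  ring_nf
  rw [I_sq]
  ring

end Complex

theorem stmt10 (α β δ : ℝ) (hα : 0 < α) (hβ : 0 < β) (hδ : 0 ≤ δ) :
    DifferentiableOn ℂ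
      (fun z : ℂ => Complex.I * (δ + β / α) + β / (z + Complex.I * α))
      {z : ℂ | 0 < z.re} ∧
    (∀ z : ℂ, 0 < z.re →
      0 ≤ (Complex.I * (δ + β / α) + β / (z + Complex.I * α)).re) ∧
    (∀ z : ℂ, 0 < z.re →
      0 ≤ ((1 / (Complex.I * z)) *
        (Complex.I * (δ + β / α) + β / (z + Complex.I * α))).re) := by
  refine ⟨?_, fun z hz => ?_, fun z hz => ?_⟩
  · exact (differentiableOn_const _).add <| (differentiableOn_const _).div
      (differentiableOn_id.add_const _) fun z hz => add_I_mul_ofReal_ne_zero hz α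
  · have hshift : 0 ≤ (β / (z + I * α)).re :=
      re_ofReal_div_nonneg hβ.le (by rw [re_add_I_mul_ofReal]; exact hz.le)
    simpa using hshift
  · rw [one_div_I_mul_mul_I_mul_add_div (fun h => hz.ne' (by simp [h])) hα.ne'
      (add_I_mul_ofReal_ne_zero hz α), add_re]
    exact add_nonneg (re_ofReal_div_nonneg hδ hz.le)
      (re_ofReal_div_nonneg (div_pos hβ hα).le (by rw [re_add_I_mul_ofReal]; exact hz.le))
end

section
/- Let C ∈ ℂ^{p×n} have full rank, α ∈ ℂ^{n×n} be positive definite Hermitian, and δ ∈ ℂ^{p×p} be positive semidefinite Hermitian. Define F(z) = i(Cα^{-1}C* + δ) + C(zI_n + iα)^{-1}C*. Then F is a Stieltjes function: F is analytic on the open right half-plane, F(z) + F(z)* is positive semidefinite there, and (1/(iz))F(z) + ((1/(iz))F(z))* is positive semidefinite there. -/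
open Matrix ComplexOrder

/-!
Call a square matrix `A` accretive when `A + Aᴴ ⪰ 0`. Accretive matrices are closed under sums,
congruences `C * A * Cᴴ` and inversion, since `A⁻¹ + A⁻ᴴ = A⁻¹ (A + Aᴴ) A⁻ᴴ`; `c • B` is accretive
for `B ⪰ 0` and `0 ≤ Re c`, and `i • H` is accretive for Hermitian `H`. With `M = z • 1 + i • α`
this makes `M`, hence `F(z) = i (Cα⁻¹Cᴴ + δ) + C M⁻¹ Cᴴ`, accretive. The identity
`i α⁻¹ + M⁻¹ = i z (α M)⁻¹` turns `F(z) / (i z)` into `δ / z + C (α M)⁻¹ Cᴴ`, accretive because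
`α M = z • α + i • α²` is. For `0 < Re z` we have `M + Mᴴ = 2 Re z • 1 ≻ 0`, so `M` is invertible
and `F` is holomorphic there, inversion being holomorphic on the units of a Banach algebra.
-/

/-- The rational Stieltjes function `F(z) = i(Cα⁻¹C* + δ) + C(zIₙ + iα)⁻¹C*`. -/
noncomputable def stieltjesFn (n p : ℕ) (C : Matrix (Fin p) (Fin n) ℂ)
    (α : Matrix (Fin n) (Fin n) ℂ) (δ : Matrix (Fin p) (Fin p) ℂ) (z : ℂ) :
    Matrix (Fin p) (Fin p) ℂ :=
  Complex.I • (C * α⁻¹ * Cᴴ + δ)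
    + C * (z • (1 : Matrix (Fin n) (Fin n) ℂ) + Complex.I • α)⁻¹ * Cᴴ

namespace Matrix

section Field

variable {m n K : Type*} [Field K] [PartialOrder K] [StarRing K] {A B : Matrix n n K}

def IsAccretive (A : Matrix n n K) : Prop := (A + Aᴴ).PosSemidef

theorem IsAccretive.add [StarOrderedRing K] (hA : A.IsAccretive) (hB : B.IsAccretive) :
    (A + B).IsAccretive := by
  rw [IsAccretive, conjTranspose_add, add_add_add_comm]
  exact PosSemidef.add hA hB

theorem IsAccretive.mul_mul_conjTranspose [Fintype m] [Fintype n] (hA : A.IsAccretive)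
    (C : Matrix m n K) : (C * A * Cᴴ).IsAccretive := by
  have : C * A * Cᴴ + (C * A * Cᴴ)ᴴ = C * (A + Aᴴ) * Cᴴ := by
    simp only [conjTranspose_mul, conjTranspose_conjTranspose, Matrix.mul_add, Matrix.add_mul,
      Matrix.mul_assoc]
  rw [IsAccretive, this]
  exact PosSemidef.mul_mul_conjTranspose_same hA C

theorem IsAccretive.inv [Fintype n] [DecidableEq n] (hA : A.IsAccretive) : A⁻¹.IsAccretive := by
  by_cases h : IsUnit A.det
  · have hH : IsUnit Aᴴ.det := by simpa [det_conjTranspose] using h.star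
    have : A⁻¹ + A⁻¹ᴴ = A⁻¹ * (A + Aᴴ) * A⁻¹ᴴ := by
      rw [conjTranspose_nonsing_inv, Matrix.mul_add, Matrix.add_mul, nonsing_inv_mul _ h,
        Matrix.mul_assoc, mul_nonsing_inv _ hH, Matrix.one_mul, Matrix.mul_one, add_comm]
    rw [IsAccretive, this]
    exact PosSemidef.mul_mul_conjTranspose_same hA _
  · simpa [IsAccretive, nonsing_inv_apply_not_isUnit _ h] using PosSemidef.zero

theorem isUnit_of_posDef_add_conjTranspose [Fintype n] [DecidableEq n] (h : (A + Aᴴ).PosDef) :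
    IsUnit A := by
  by_contra hA
  obtain ⟨v, hv, hAv⟩ : ∃ v ≠ 0, A *ᵥ v = 0 := by
    obtain ⟨v, w, hvw⟩ := Function.not_injective_iff.mp <| mulVec_injective_iff_isUnit.not.mpr hA
    exact ⟨v - w, by simp [sub_eq_zero, hvw, mulVec_sub]⟩
  have := h.dotProduct_mulVec_pos hv
  rw [add_mulVec, dotProduct_add, dotProduct_mulVec (star v) Aᴴ, ← star_mulVec, hAv] at this
  simp at this

end Field

section Complex

variable {n : Type*} {B H : Matrix n n ℂ}

theorem IsHermitian.I_smul_add_conjTranspose (hH : H.IsHermitian) :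
    Complex.I • H + (Complex.I • H)ᴴ = 0 := by
  rw [conjTranspose_smul, hH.eq, Complex.star_def, Complex.conj_I, neg_smul, add_neg_cancel]

theorem IsHermitian.smul_add_conjTranspose (hB : B.IsHermitian) (c : ℂ) :
    c • B + (c • B)ᴴ = ((2 * c.re : ℝ) : ℂ) • B := by
  rw [conjTranspose_smul, hB.eq, ← add_smul, Complex.star_def, Complex.add_conj]

theorem IsHermitian.isAccretive_I_smul (hH : H.IsHermitian) : (Complex.I • H).IsAccretive := by
  rw [IsAccretive, hH.I_smul_add_conjTranspose]
  exact PosSemidef.zero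

theorem PosSemidef.isAccretive_smul (hB : B.PosSemidef) {c : ℂ} (hc : 0 ≤ c.re) :
    (c • B).IsAccretive := by
  rw [IsAccretive, hB.1.smul_add_conjTranspose]
  exact hB.smul (Complex.zero_le_real.mpr (by positivity))

theorem isUnit_smul_one_add_I_smul [Fintype n] [DecidableEq n] (hH : H.IsHermitian) {z : ℂ}
    (hz : 0 < z.re) : IsUnit (z • (1 : Matrix n n ℂ) + Complex.I • H) := by
  apply isUnit_of_posDef_add_conjTranspose
  rw [conjTranspose_add, add_add_add_comm, isHermitian_one.smul_add_conjTranspose,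
    hH.I_smul_add_conjTranspose, add_zero]
  exact PosDef.one.smul (Complex.zero_lt_real.mpr (by positivity))

end Complex

end Matrix

section Stieltjes

variable {n p : ℕ} {C : Matrix (Fin p) (Fin n) ℂ} {α : Matrix (Fin n) (Fin n) ℂ}
  {δ : Matrix (Fin p) (Fin p) ℂ} {z : ℂ}

section Analytic

attribute [local instance] Matrix.linftyOpNormedRing Matrix.linftyOpNormedAlgebra

theorem differentiableOn_stieltjesFn_apply (hα : α.IsHermitian) (i j : Fin p) :
    DifferentiableOn ℂ (fun z => stieltjesFn n p C α δ z i j) {z | 0 < z.re} := by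
  have hinv : DifferentiableOn ℂ
      (fun z : ℂ => (z • (1 : Matrix (Fin n) (Fin n) ℂ) + Complex.I • α)⁻¹) {z | 0 < z.re} := by
    simp_rw [nonsing_inv_eq_ringInverse]
    have hM : Differentiable ℂ
        (fun z : ℂ => z • (1 : Matrix (Fin n) (Fin n) ℂ) + Complex.I • α) := by
      fun_prop
    exact hM.differentiableOn.inverse fun z hz => isUnit_smul_one_add_I_smul hα hz
  have hinv_apply : ∀ k l, DifferentiableOn ℂ
      (fun z : ℂ => (z • (1 : Matrix (Fin n) (Fin n) ℂ) + Complex.I • α)⁻¹ k l) {z | 0 < z.re} :=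
    fun k l => (LinearMap.toContinuousLinearMap (entryLinearMap ℂ ℂ k l)).differentiable
      |>.comp_differentiableOn hinv
  simp only [stieltjesFn, Matrix.add_apply, Matrix.mul_apply]
  refine (differentiableOn_const _).add (.fun_sum fun l _ => .mul_const ?_ _)
  exact .fun_sum fun k _ => (hinv_apply k l).const_mul _

end Analytic

theorem isAccretive_stieltjesFn (hα : α.IsHermitian) (hδ : δ.IsHermitian) (hz : 0 ≤ z.re) :
    (stieltjesFn n p C α δ z).IsAccretive := by
  have hX : (C * α⁻¹ * Cᴴ + δ).IsHermitian := (isHermitian_mul_mul_conjTranspose C hα.inv).add hδ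
  have hM : (z • (1 : Matrix (Fin n) (Fin n) ℂ) + Complex.I • α).IsAccretive :=
    (PosSemidef.one.isAccretive_smul hz).add hα.isAccretive_I_smul
  exact hX.isAccretive_I_smul.add (hM.inv.mul_mul_conjTranspose C)

theorem one_div_I_mul_smul_stieltjesFn (hα : IsUnit α.det)
    (hM : IsUnit (z • (1 : Matrix (Fin n) (Fin n) ℂ) + Complex.I • α).det) (hz : z ≠ 0) :
    (1 / (Complex.I * z)) • stieltjesFn n p C α δ z
      = (1 / z) • δ + C * (α * (z • (1 : Matrix (Fin n) (Fin n) ℂ) + Complex.I • α))⁻¹ * Cᴴ := by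
  set M := z • (1 : Matrix (Fin n) (Fin n) ℂ) + Complex.I • α
  have hIM : Complex.I • M + α = (Complex.I * z) • 1 := by
    simp only [M, smul_add, smul_smul, Complex.I_mul_I, neg_one_smul, neg_add_cancel_right]
  have hres : Complex.I • α⁻¹ + M⁻¹ = (Complex.I * z) • (α * M)⁻¹ := calc
    Complex.I • α⁻¹ + M⁻¹ = M⁻¹ * (Complex.I • M + α) * α⁻¹ := by
      rw [Matrix.mul_add, Matrix.add_mul, Matrix.mul_smul, nonsing_inv_mul _ hM, Matrix.smul_mul,
        Matrix.one_mul, Matrix.mul_assoc, mul_nonsing_inv _ hα, Matrix.mul_one]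
    _ = (Complex.I * z) • (α * M)⁻¹ := by
      rw [hIM, Matrix.mul_smul, Matrix.mul_one, Matrix.smul_mul, Matrix.mul_inv_rev]
  have hF : stieltjesFn n p C α δ z = Complex.I • δ + C * (Complex.I • α⁻¹ + M⁻¹) * Cᴴ := by
    simp only [stieltjesFn, M, Matrix.mul_add, Matrix.add_mul, Matrix.mul_smul, Matrix.smul_mul,
      smul_add]
    abel
  have hIz : Complex.I * z ≠ 0 := mul_ne_zero Complex.I_ne_zero hz
  rw [hF, hres, smul_add, smul_smul, Matrix.mul_smul, Matrix.smul_mul, smul_smul,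
    one_div_mul_cancel hIz, one_smul]
  congr 2
  field_simp

theorem isAccretive_one_div_I_mul_smul_stieltjesFn (hα : α.PosDef) (hδ : δ.PosSemidef)
    (hz : 0 < z.re) : ((1 / (Complex.I * z)) • stieltjesFn n p C α δ z).IsAccretive := by
  have hM := isUnit_smul_one_add_I_smul hα.1 hz
  rw [one_div_I_mul_smul_stieltjesFn ((isUnit_iff_isUnit_det _).1 hα.isUnit)
    ((isUnit_iff_isUnit_det _).1 hM) (by rintro rfl; simp at hz)]
  have hαα : (α * α).IsHermitian := by simpa [hα.1.eq] using isHermitian_mul_conjTranspose_self α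
  have hαM : (α * (z • (1 : Matrix (Fin n) (Fin n) ℂ) + Complex.I • α)).IsAccretive := by
    rw [Matrix.mul_add, Matrix.mul_smul, Matrix.mul_one, Matrix.mul_smul]
    exact (hα.posSemidef.isAccretive_smul hz.le).add hαα.isAccretive_I_smul
  have hz_inv : 0 ≤ (1 / z).re := by
    rw [one_div, Complex.inv_re]
    exact div_nonneg hz.le (Complex.normSq_nonneg z)
  exact (hδ.isAccretive_smul hz_inv).add (hαM.inv.mul_mul_conjTranspose C)

end Stieltjes

theorem stmt11_general (n p : ℕ) (C : Matrix (Fin p) (Fin n) ℂ)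
    (α : Matrix (Fin n) (Fin n) ℂ) (δ : Matrix (Fin p) (Fin p) ℂ)
    (hα : α.PosDef) (hδ : δ.PosSemidef) :
    (∀ i j, DifferentiableOn ℂ (fun z : ℂ => stieltjesFn n p C α δ z i j) {z : ℂ | 0 < z.re}) ∧
    (∀ z : ℂ, 0 < z.re →
      (stieltjesFn n p C α δ z + (stieltjesFn n p C α δ z)ᴴ).PosSemidef) ∧
    (∀ z : ℂ, 0 < z.re →
      ((1 / (Complex.I * z)) • stieltjesFn n p C α δ z
        + ((1 / (Complex.I * z)) • stieltjesFn n p C α δ z)ᴴ).PosSemidef) :=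
  ⟨differentiableOn_stieltjesFn_apply hα.1, fun _ hz => isAccretive_stieltjesFn hα.1 hδ.1 hz.le,
    fun _ hz => isAccretive_one_div_I_mul_smul_stieltjesFn hα hδ hz⟩

theorem stmt11 (n p : ℕ) (C : Matrix (Fin p) (Fin n) ℂ)
    (α : Matrix (Fin n) (Fin n) ℂ) (δ : Matrix (Fin p) (Fin p) ℂ)
    (hC : C.rank = min p n) (hα : α.PosDef) (hδ : δ.PosSemidef) :
    (∀ i j, DifferentiableOn ℂ (fun z : ℂ => stieltjesFn n p C α δ z i j) {z : ℂ | 0 < z.re}) ∧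
    (∀ z : ℂ, 0 < z.re →
      (stieltjesFn n p C α δ z + (stieltjesFn n p C α δ z)ᴴ).PosSemidef) ∧
    (∀ z : ℂ, 0 < z.re →
      ((1 / (Complex.I * z)) • stieltjesFn n p C α δ z
        + ((1 / (Complex.I * z)) • stieltjesFn n p C α δ z)ᴴ).PosSemidef) :=
  stmt11_general n p C α δ hα hδ
end

section
/- Let a > 0 and d_L ∈ ℝ, and let F_R(z) = D_R + C_R(zI_m - A_R)^{-1}B_R be a q×q rational function with D_R + aI_q invertible. Define f_L(w) = d_L + 1/(w+a)². Then f_L(F_R(z)) = d_L I_q + (aI_q + F_R(z))^{-2} admits the 2m-dimensional realization with A = [[A_R - B_R E^{-1}C_R, -B_R E^{-2}C_R],[0, A_R - B_R E^{-1}C_R]], B = [-B_R E^{-2}; -B_R E^{-1}], C = [E^{-1}C_R, E^{-2}C_R], D = d_L I_q + E^{-2}, where E := D_R + aI_q; i.e., for all z where everything is defined, d_L I_q + (aI_q + F_R(z))^{-2} = D + C(zI_{2m} - A)^{-1}B. -/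
/-!
Write `T(z) = D + C (z - A)⁻¹ B` for the transfer function of a state-space realization.
With `E = D_R + a`, the matrix `a + F_R(z)` is the transfer function of `(A_R, B_R, C_R, E)`,
and the Woodbury identity realizes its inverse by `(A_R - B_R E⁻¹ C_R, -B_R E⁻¹, E⁻¹ C_R, E⁻¹)`.
Squaring is then the cascade connection of this realization with itself, whose state matrix is
block upper triangular; adding `d_L` only changes the feedthrough term.
-/

open Matrix

variable {R : Type*} [CommRing R] {n n₁ n₂ p r s : Type*}
  [Fintype n] [DecidableEq n] [Fintype n₁] [DecidableEq n₁] [Fintype n₂] [DecidableEq n₂]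

noncomputable def transferFunction (A : Matrix n n R) (B : Matrix n r R) (C : Matrix p n R)
    (D : Matrix p r R) (z : R) : Matrix p r R :=
  D + C * (z • 1 - A)⁻¹ * B

omit [Fintype n₁] [Fintype n₂] in
theorem smul_one_sub_fromBlocks_zero₂₁ (z : R) (A₁ : Matrix n₁ n₁ R) (M : Matrix n₁ n₂ R)
    (A₂ : Matrix n₂ n₂ R) :
    z • (1 : Matrix (n₁ ⊕ n₂) (n₁ ⊕ n₂) R) - fromBlocks A₁ M 0 A₂
      = fromBlocks (z • 1 - A₁) (-M) 0 (z • 1 - A₂) := by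
  rw [← fromBlocks_one, fromBlocks_smul, sub_eq_add_neg, fromBlocks_neg, fromBlocks_add]
  simp [sub_eq_add_neg]

theorem transferFunction_mul [Fintype r] (A₁ : Matrix n₁ n₁ R) (B₁ : Matrix n₁ r R)
    (C₁ : Matrix p n₁ R) (D₁ : Matrix p r R) (A₂ : Matrix n₂ n₂ R) (B₂ : Matrix n₂ s R)
    (C₂ : Matrix r n₂ R) (D₂ : Matrix r s R) (z : R)
    (h₁ : IsUnit (z • 1 - A₁).det) (h₂ : IsUnit (z • 1 - A₂).det) :
    transferFunction A₁ B₁ C₁ D₁ z * transferFunction A₂ B₂ C₂ D₂ z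
      = transferFunction (fromBlocks A₁ (B₁ * C₂) 0 A₂) (fromRows (B₁ * D₂) B₂)
          (fromCols C₁ (D₁ * C₂)) (D₁ * D₂) z := by
  have hinv := inv_fromBlocks_zero₂₁_of_isUnit_iff (z • 1 - A₁) (-(B₁ * C₂)) (z • 1 - A₂)
    (by simp only [isUnit_iff_isUnit_det, h₁, h₂])
  simp only [transferFunction, smul_one_sub_fromBlocks_zero₂₁, hinv, fromCols_mul_fromBlocks,
    fromCols_mul_fromRows, Matrix.mul_zero, add_zero, Matrix.mul_neg, Matrix.neg_mul, neg_neg,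
    Matrix.add_mul, Matrix.mul_add, Matrix.mul_assoc]
  abel

theorem transferFunction_inv [Fintype p] [DecidableEq p] (A : Matrix n n R) (B : Matrix n p R)
    (C : Matrix p n R) (D : Matrix p p R) (z : R) (hD : IsUnit D.det)
    (hA : IsUnit (z • 1 - A).det) (hAfb : IsUnit (z • 1 - (A - B * D⁻¹ * C)).det) :
    (transferFunction A B C D z)⁻¹
      = transferFunction (A - B * D⁻¹ * C) (-(B * D⁻¹)) (D⁻¹ * C) D⁻¹ z := by
  have hfb : (z • 1 - A)⁻¹⁻¹ + B * D⁻¹ * C = z • 1 - (A - B * D⁻¹ * C) := by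
    rw [nonsing_inv_nonsing_inv _ hA]
    abel
  have woodbury := add_mul_mul_inv_eq_sub D C (z • 1 - A)⁻¹ B
    ((isUnit_iff_isUnit_det _).2 hD)
    ((isUnit_iff_isUnit_det _).2 (isUnit_nonsing_inv_det_iff.2 hA))
    ((isUnit_iff_isUnit_det _).2 (hfb ▸ hAfb))
  rw [transferFunction, woodbury, hfb, transferFunction, sub_eq_add_neg]
  simp only [Matrix.mul_neg, Matrix.mul_assoc]

theorem stmt18_general (m q : ℕ) (a d_L : ℝ)
    (A_R : Matrix (Fin m) (Fin m) ℂ) (B_R : Matrix (Fin m) (Fin q) ℂ)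
    (C_R : Matrix (Fin q) (Fin m) ℂ) (D_R : Matrix (Fin q) (Fin q) ℂ)
    (E : Matrix (Fin q) (Fin q) ℂ)
    (hE : E = D_R + (a : ℂ) • (1 : Matrix (Fin q) (Fin q) ℂ))
    (hEunit : IsUnit E.det)
    (z : ℂ)
    (hz : IsUnit (z • (1 : Matrix (Fin m) (Fin m) ℂ) - A_R).det)
    (hcomp : IsUnit (z • (1 : Matrix (Fin m ⊕ Fin m) (Fin m ⊕ Fin m) ℂ)
        - Matrix.fromBlocks
            (A_R - B_R * E⁻¹ * C_R) (-(B_R * E⁻¹ * E⁻¹ * C_R))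
            0 (A_R - B_R * E⁻¹ * C_R)).det) :
    (d_L : ℂ) • (1 : Matrix (Fin q) (Fin q) ℂ)
      + ((a : ℂ) • (1 : Matrix (Fin q) (Fin q) ℂ)
          + (D_R + C_R * (z • (1 : Matrix (Fin m) (Fin m) ℂ) - A_R)⁻¹ * B_R))⁻¹
        * ((a : ℂ) • (1 : Matrix (Fin q) (Fin q) ℂ)
          + (D_R + C_R * (z • (1 : Matrix (Fin m) (Fin m) ℂ) - A_R)⁻¹ * B_R))⁻¹
    = ((d_L : ℂ) • (1 : Matrix (Fin q) (Fin q) ℂ) + E⁻¹ * E⁻¹)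
      + Matrix.fromCols (E⁻¹ * C_R) (E⁻¹ * E⁻¹ * C_R)
        * (z • (1 : Matrix (Fin m ⊕ Fin m) (Fin m ⊕ Fin m) ℂ)
            - Matrix.fromBlocks
                (A_R - B_R * E⁻¹ * C_R) (-(B_R * E⁻¹ * E⁻¹ * C_R))
                0 (A_R - B_R * E⁻¹ * C_R))⁻¹
        * Matrix.fromRows (-(B_R * E⁻¹ * E⁻¹)) (-(B_R * E⁻¹)) := by
  have hshift : (a : ℂ) • 1 + (D_R + C_R * (z • 1 - A_R)⁻¹ * B_R)
      = transferFunction A_R B_R C_R E z := by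
    rw [transferFunction, hE]
    abel
  have hfb : IsUnit (z • 1 - (A_R - B_R * E⁻¹ * C_R)).det := by
    rw [smul_one_sub_fromBlocks_zero₂₁, det_fromBlocks_zero₂₁] at hcomp
    exact isUnit_of_mul_isUnit_left hcomp
  rw [hshift, transferFunction_inv _ _ _ _ _ hEunit hz hfb,
    transferFunction_mul _ _ _ _ _ _ _ _ _ hfb hfb, transferFunction]
  simp only [Matrix.neg_mul, Matrix.mul_assoc, add_assoc]

theorem stmt18 (m q : ℕ) (a d_L : ℝ) (ha : 0 < a)
    (A_R : Matrix (Fin m) (Fin m) ℂ) (B_R : Matrix (Fin m) (Fin q) ℂ)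
    (C_R : Matrix (Fin q) (Fin m) ℂ) (D_R : Matrix (Fin q) (Fin q) ℂ)
    (E : Matrix (Fin q) (Fin q) ℂ)
    (hE : E = D_R + (a : ℂ) • (1 : Matrix (Fin q) (Fin q) ℂ))
    (hEunit : IsUnit E.det)
    (z : ℂ)
    (hz : IsUnit (z • (1 : Matrix (Fin m) (Fin m) ℂ) - A_R).det)
    (hFa : IsUnit ((a : ℂ) • (1 : Matrix (Fin q) (Fin q) ℂ)
        + (D_R + C_R * (z • (1 : Matrix (Fin m) (Fin m) ℂ) - A_R)⁻¹ * B_R)).det)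
    (hcomp : IsUnit (z • (1 : Matrix (Fin m ⊕ Fin m) (Fin m ⊕ Fin m) ℂ)
        - Matrix.fromBlocks
            (A_R - B_R * E⁻¹ * C_R) (-(B_R * E⁻¹ * E⁻¹ * C_R))
            0 (A_R - B_R * E⁻¹ * C_R)).det) :
    (d_L : ℂ) • (1 : Matrix (Fin q) (Fin q) ℂ)
      + ((a : ℂ) • (1 : Matrix (Fin q) (Fin q) ℂ)
          + (D_R + C_R * (z • (1 : Matrix (Fin m) (Fin m) ℂ) - A_R)⁻¹ * B_R))⁻¹
        * ((a : ℂ) • (1 : Matrix (Fin q) (Fin q) ℂ)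
          + (D_R + C_R * (z • (1 : Matrix (Fin m) (Fin m) ℂ) - A_R)⁻¹ * B_R))⁻¹
    = ((d_L : ℂ) • (1 : Matrix (Fin q) (Fin q) ℂ) + E⁻¹ * E⁻¹)
      + Matrix.fromCols (E⁻¹ * C_R) (E⁻¹ * E⁻¹ * C_R)
        * (z • (1 : Matrix (Fin m ⊕ Fin m) (Fin m ⊕ Fin m) ℂ)
            - Matrix.fromBlocks
                (A_R - B_R * E⁻¹ * C_R) (-(B_R * E⁻¹ * E⁻¹ * C_R))
                0 (A_R - B_R * E⁻¹ * C_R))⁻¹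
        * Matrix.fromRows (-(B_R * E⁻¹ * E⁻¹)) (-(B_R * E⁻¹)) :=
  stmt18_general m q a d_L A_R B_R C_R D_R E hE hEunit z hz hcomp
end
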